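/- Let A be a deterministic finite automaton obtained from a coloring with no stable pairs of a finite strongly connected k-periodic digraph, and let A and B be two distinct F-cliques with |A| > 1. Then |A \ (A∩B)| = |B \ (A∩B)| > 1, i.e., A and B differ in more than one element. -/

import Mathlib

def Adj {V : Type*} (E : V → Multiset V) (p q : V) : Prop := q ∈ E p

def StronglyConnected {V : Type*} (E : V → Multiset V) : Prop :=
  ∀ p q : V, Relation.ReflTransGen (Adj E) p q

def HasCycle {V : Type*} (E : V → Multiset V) (n : ℕ) : Prop :=
  0 < n ∧ ∃ c : ZMod n → V, ∀ i, c (i + 1) ∈ E (c i)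

def CycleGcd {V : Type*} (E : V → Multiset V) (k : ℕ) : Prop :=
  (∀ n, HasCycle E n → k ∣ n) ∧ ∀ m, (∀ n, HasCycle E n → m ∣ n) → m ∣ k

def IsColoring {V : Type*} {d : ℕ} (E : V → Multiset V) (δ : V → Fin d → V) : Prop :=
  ∀ v, (List.ofFn (δ v) : Multiset V) = E v

def run {V A : Type*} (δ : V → A → V) (p : V) (s : List A) : V :=
  s.foldl δ p

def wordImage {V A : Type*} [Fintype V] [DecidableEq V] (δ : V → A → V) (s : List A) : Finset V :=
  Finset.univ.image (fun p => run δ p s)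

def IsPathLen {V : Type*} (E : V → Multiset V) (p q : V) (n : ℕ) : Prop :=
  ∃ c : Fin (n + 1) → V, c 0 = p ∧ c (Fin.last n) = q ∧
    ∀ i : Fin n, c i.succ ∈ E (c i.castSucc)

def SyncPair {V A : Type*} (δ : V → A → V) (p q : V) : Prop :=
  ∃ s : List A, run δ p s = run δ q s

def StablePair {V A : Type*} (δ : V → A → V) (p q : V) : Prop :=
  ∀ u : List A, SyncPair δ (run δ p u) (run δ q u)

def DeadlockPair {V A : Type*} (δ : V → A → V) (p q : V) : Prop :=
  ∀ s : List A, run δ p s ≠ run δ q s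

def IsFClique {V A : Type*} [Fintype V] [DecidableEq V] (δ : V → A → V) (F : Finset V) : Prop :=
  (∀ p ∈ F, ∀ q ∈ F, p ≠ q → DeadlockPair δ p q) ∧
  ∀ G : Finset V, (∀ p ∈ G, ∀ q ∈ G, p ≠ q → DeadlockPair δ p q) → G.card ≤ F.card

noncomputable def levelOf {V : Type*} (f : V → V) (v : V) : ℕ :=
  sInf {n | ∃ m, 0 < m ∧ f^[m] (f^[n] v) = f^[n] v}

noncomputable def rootOf {V : Type*} (f : V → V) (v : V) : V := f^[levelOf f v] v

noncomputable def maxLevel {V : Type*} [Fintype V] (f : V → V) : ℕ :=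
  Finset.univ.sup (levelOf f)

def UniqueMaxTree {V : Type*} [Fintype V] (f : V → V) : Prop :=
  0 < maxLevel f ∧ ∃ r : V, ∀ v : V, levelOf f v = maxLevel f → rootOf f v = r

def HasCycleIn {V : Type*} (E : V → Multiset V) (S : Finset V) (n : ℕ) : Prop :=
  0 < n ∧ ∃ c : ZMod n → V, (∀ i, c i ∈ S) ∧ ∀ i, c (i + 1) ∈ E (c i)

def CycleGcdIn {V : Type*} (E : V → Multiset V) (S : Finset V) (k : ℕ) : Prop :=
  (∀ n, HasCycleIn E S n → k ∣ n) ∧ ∀ m, (∀ n, HasCycleIn E S n → m ∣ n) → m ∣ k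

/-!
If two F-cliques `A ≠ B` (which have equal size by maximality) differed in a single element,
`A \ B = {a}` and `B \ A = {b}`, then `a, b` would be a stable pair: were some word `u` to send
them to a deadlock, `u` would send every pair of `insert b A` to a deadlock, and the image of
`insert b A` under `u` would be a pairwise deadlocked set larger than the F-clique `A`.
-/

section Deadlock

variable {V α : Type*} {δ : V → α → V}

lemma run_append (δ : V → α → V) (p : V) (u s : List α) :
    run δ p (u ++ s) = run δ (run δ p u) s :=
  List.foldl_append ..

lemma DeadlockPair.symm {p q : V} (h : DeadlockPair δ p q) : DeadlockPair δ q p :=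
  fun s hs => h s hs.symm

lemma DeadlockPair.ne {p q : V} (h : DeadlockPair δ p q) : p ≠ q :=
  h []

lemma DeadlockPair.run_word {p q : V} (h : DeadlockPair δ p q) (u : List α) :
    DeadlockPair δ (run δ p u) (run δ q u) := fun s => by
  simpa only [← run_append] using h (u ++ s)

lemma deadlockPair_of_not_syncPair {p q : V} (h : ¬ SyncPair δ p q) : DeadlockPair δ p q :=
  fun s hs => h ⟨s, hs⟩

end Deadlock

namespace IsFClique

open Function

variable {V α : Type*} [Fintype V] [DecidableEq V] {δ : V → α → V} {A B : Finset V}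

lemma pairwise (hA : IsFClique δ A) : (A : Set V).Pairwise (DeadlockPair δ) :=
  fun p hp q hq => hA.1 p hp q hq

lemma card_le (hA : IsFClique δ A) {S : Finset V} (hS : (S : Set V).Pairwise (DeadlockPair δ)) :
    S.card ≤ A.card :=
  hA.2 S fun _ hp _ hq => hS hp hq

lemma card_eq (hA : IsFClique δ A) (hB : IsFClique δ B) : A.card = B.card :=
  le_antisymm (hB.card_le hA.pairwise) (hA.card_le hB.pairwise)

lemma card_le_of_pairwise_run (hA : IsFClique δ A) {S : Finset V} {u : List α}
    (hS : (S : Set V).Pairwise (DeadlockPair δ on (run δ · u))) : S.card ≤ A.card := by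
  have hinj : Set.InjOn (run δ · u) S :=
    Set.injOn_iff_pairwise_ne.2 (hS.mono' fun _ _ h => h.ne)
  calc S.card = (S.image (run δ · u)).card := (Finset.card_image_of_injOn hinj).symm
    _ ≤ A.card := hA.card_le (by rw [Finset.coe_image]; exact hinj.pairwise_image.2 hS)

lemma stablePair_of_sdiff_eq_singleton (hA : IsFClique δ A) (hB : IsFClique δ B) {a b : V}
    (ha : A \ B = {a}) (hb : B \ A = {b}) : StablePair δ a b := by
  intro u
  by_contra hsync
  have hbB : b ∈ B ∧ b ∉ A := Finset.mem_sdiff.1 (hb ▸ Finset.mem_singleton_self b)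
  have hAB : ∀ x ∈ A, x ≠ a → x ∈ B := fun x hx hxa => by
    by_contra hxB
    exact hxa (Finset.mem_singleton.1 (ha ▸ Finset.mem_sdiff.2 ⟨hx, hxB⟩))
  have hdeadlock : ∀ x ∈ A, DeadlockPair δ (run δ x u) (run δ b u) := fun x hx => by
    by_cases hxa : x = a
    · exact hxa ▸ deadlockPair_of_not_syncPair hsync
    · exact (hB.pairwise (hAB x hx hxa) hbB.1 (ne_of_mem_of_not_mem hx hbB.2)).run_word u
  have hpairwise : ((insert b A : Finset V) : Set V).Pairwise (DeadlockPair δ on (run δ · u)) := by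
    rw [Finset.coe_insert]
    exact (hA.pairwise.mono' fun _ _ h => h.run_word u).insert
      fun x hx _ => ⟨(hdeadlock x hx).symm, hdeadlock x hx⟩
  have := hA.card_le_of_pairwise_run hpairwise
  rw [Finset.card_insert_of_notMem hbB.2] at this
  omega

lemma exists_stablePair_of_card_sdiff_eq_one (hA : IsFClique δ A) (hB : IsFClique δ B)
    (h : (A \ B).card = 1) : ∃ a b, a ≠ b ∧ StablePair δ a b := by
  obtain ⟨a, ha⟩ := Finset.card_eq_one.1 h
  obtain ⟨b, hb⟩ := Finset.card_eq_one.1 (Finset.card_sdiff_comm (hA.card_eq hB) ▸ h)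
  have haA : a ∈ A := (Finset.mem_sdiff.1 (ha ▸ Finset.mem_singleton_self a)).1
  have hbA : b ∉ A := (Finset.mem_sdiff.1 (hb ▸ Finset.mem_singleton_self b)).2
  exact ⟨a, b, ne_of_mem_of_not_mem haA hbA, hA.stablePair_of_sdiff_eq_singleton hB ha hb⟩

end IsFClique

theorem stmt6_general {V : Type*} [Fintype V] [DecidableEq V] {d : ℕ}
    (δ : V → Fin d → V)
    (hnostable : ∀ p q : V, p ≠ q → ¬ StablePair δ p q)
    (A B : Finset V) (hA : IsFClique δ A) (hB : IsFClique δ B)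
    (hAB : A ≠ B) :
    (A \ (A ∩ B)).card = (B \ (A ∩ B)).card ∧ 1 < (A \ (A ∩ B)).card := by
  have hcard := hA.card_eq hB
  rw [Finset.sdiff_inter_self_left, Finset.sdiff_inter_self_right]
  refine ⟨Finset.card_sdiff_comm hcard, ?_⟩
  by_contra! hle
  obtain h0 | h1 := Nat.le_one_iff_eq_zero_or_eq_one.1 hle
  · have hsub : A ⊆ B := Finset.sdiff_eq_empty_iff_subset.1 (Finset.card_eq_zero.1 h0)
    exact hAB (Finset.eq_of_subset_of_card_le hsub hcard.ge)
  · obtain ⟨a, b, hab, hstable⟩ := hA.exists_stablePair_of_card_sdiff_eq_one hB h1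
    exact hnostable a b hab hstable

/-- in a coloring without stable pairs of a k-periodic graph, two
distinct F-cliques A, B with |A| > 1 differ in more than one element. -/
theorem stmt6 {V : Type*} [Fintype V] [DecidableEq V] [Nonempty V] {d k : ℕ}
    (E : V → Multiset V)
    (hsc : StronglyConnected E)
    (hgcd : CycleGcd E k)
    (δ : V → Fin d → V) (hδ : IsColoring E δ)
    (hnostable : ∀ p q : V, p ≠ q → ¬ StablePair δ p q)
    (A B : Finset V) (hA : IsFClique δ A) (hB : IsFClique δ B)
    (hAB : A ≠ B) (hcard : 1 < A.card) :
    (A \ (A ∩ B)).card = (B \ (A ∩ B)).card ∧ 1 < (A \ (A ∩ B)).card :=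
  stmt6_general δ hnostable A B hA hB hAB
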